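/- Let n ∈ ℕ and set ν = n/3 ∈ ℂ. The operators J¹, …, J⁸ satisfy the following nine identities in End(R) (juxtaposition denoting composition, constants denoting multiples of the identity): J¹∘J³ = J²∘(J⁷ + ν); J¹∘J⁴ = J⁷∘J⁷ + J⁷∘J⁸ − J⁷ + ν·J⁸ − ν(ν+1); J¹∘J⁵ = J⁶∘(J⁷ + J⁸ − (ν+1)); J²∘J⁴ = J³∘(J⁷ + J⁸ − (ν+1)); J²∘J⁵ = J⁷∘J⁸ + J⁸∘J⁸ + ν·J⁷ − J⁸ − ν(ν+1); J²∘J⁶ = J¹∘(J⁸ + ν); J³∘J⁵ = J⁴∘(J⁸ + ν); J³∘J⁶ = J⁷∘J⁸ + ν·J⁷ + (ν+1)·J⁸ + ν(ν+1); J⁴∘J⁶ = J⁵∘(J⁷ + ν + 1). -/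

import Mathlib

/-! The operators `x, y, ∂_x, ∂_y` satisfy the relations of the Weyl algebra:
`[∂_x, x] = [∂_y, y] = 1`, and all other pairs commute. Each of the nine identities is
checked by expanding both sides and moving every derivative to the right of every
multiplication operator using these relations; the two normal forms are then equal as
`ℂ`-linear combinations of the monomials `x^a y^b ∂_x^c ∂_y^d`. -/

noncomputable section

open MvPolynomial

/-- The bivariate polynomial ring `R = ℂ[x,y]`. -/
abbrev R2 : Type := MvPolynomial (Fin 2) ℂ

/-- The variable `x`. -/
def Xv : R2 := X 0

/-- The variable `y`. -/
def Yv : R2 := X 1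

/-- The partial derivative `∂_x` as a `ℂ`-linear endomorphism. -/
def Dx : Module.End ℂ R2 := (pderiv (0 : Fin 2)).toLinearMap

/-- The partial derivative `∂_y` as a `ℂ`-linear endomorphism. -/
def Dy : Module.End ℂ R2 := (pderiv (1 : Fin 2)).toLinearMap

/-- Multiplication by `f` as an endomorphism. -/
def Mf (f : R2) : Module.End ℂ R2 := LinearMap.mulLeft ℂ f

/-- All compositions (products) of at most `k` elements of `S`; the empty
composition is the identity. -/
def prodsLE (k : ℕ) (S : Set (Module.End ℂ R2)) : Set (Module.End ℂ R2) :=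
  {T | ∃ l : List (Module.End ℂ R2), l.length ≤ k ∧ (∀ a ∈ l, a ∈ S) ∧ l.prod = T}

/-- The rectangular module `ℛ_{n,m}`. -/
def Rmod (n m : ℕ) : Submodule ℂ R2 :=
  Submodule.span ℂ {P : R2 | ∃ i j : ℕ, i ≤ n ∧ j ≤ m ∧ P = Xv ^ i * Yv ^ j}

/-- The triangular module `𝒯ₙ`. -/
def Tmod (n : ℕ) : Submodule ℂ R2 :=
  Submodule.span ℂ {P : R2 | ∃ i j : ℕ, i + j ≤ n ∧ P = Xv ^ i * Yv ^ j}

/-- The staircase module `𝒮^r_{p,q}`. -/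
def Smod (r p q : ℕ) : Submodule ℂ R2 :=
  Submodule.span ℂ {P : R2 | ∃ i j : ℕ, i + r * j ≤ p ∧ j ≤ q ∧ P = Xv ^ i * Yv ^ j}

/-- An endomorphism has nonpositive `y`-degree if it maps each monomial `xᵃyᵇ`
into the span of the monomials `x^c y^e` with `e ≤ b`. -/
def NonposY (T : Module.End ℂ R2) : Prop :=
  ∀ a b : ℕ, T (Xv ^ a * Yv ^ b) ∈
    Submodule.span ℂ {P : R2 | ∃ c e : ℕ, e ≤ b ∧ P = Xv ^ c * Yv ^ e}

/-- `J¹ = M_{x²}∘D_x + M_{xy}∘D_y − a·M_x`. -/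
def J1 (a : ℂ) : Module.End ℂ R2 := Mf (Xv ^ 2) * Dx + Mf (Xv * Yv) * Dy - a • Mf Xv

/-- `J² = M_{xy}∘D_x + M_{y²}∘D_y − a·M_y`. -/
def J2 (a : ℂ) : Module.End ℂ R2 := Mf (Xv * Yv) * Dx + Mf (Yv ^ 2) * Dy - a • Mf Yv

/-- `J³ = M_y∘D_x`. -/
def J3 : Module.End ℂ R2 := Mf Yv * Dx

/-- `J⁴ = D_x`. -/
def J4 : Module.End ℂ R2 := Dx

/-- `J⁵ = D_y`. -/
def J5 : Module.End ℂ R2 := Dy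

/-- `J⁶ = M_x∘D_y`. -/
def J6 : Module.End ℂ R2 := Mf Xv * Dy

/-- `J⁷ = M_x∘D_x − (a/3)·id`. -/
def J7 (a : ℂ) : Module.End ℂ R2 := Mf Xv * Dx - (a / 3) • 1

/-- `J⁸ = M_y∘D_y − (a/3)·id`. -/
def J8 (a : ℂ) : Module.End ℂ R2 := Mf Yv * Dy - (a / 3) • 1

namespace Derivation

variable {R A : Type*} [CommSemiring R] [CommSemiring A] [Algebra R A]

theorem toLinearMap_mul_mulLeft (D : Derivation R A A) (a : A) :
    D.toLinearMap * LinearMap.mulLeft R a =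
      LinearMap.mulLeft R a * D.toLinearMap + LinearMap.mulLeft R (D a) := by
  ext b
  simp [leibniz, mul_comm]

end Derivation

namespace MvPolynomial

variable {R σ : Type*} [CommRing R]

theorem pderiv_pderiv_comm (i j : σ) (p : MvPolynomial σ R) :
    pderiv i (pderiv j p) = pderiv j (pderiv i p) := by
  classical
  have h : ⁅pderiv i, pderiv j⁆ = (0 : Derivation R (MvPolynomial σ R) _) :=
    derivation_ext fun k => by
      rw [Derivation.commutator_apply, pderiv_X, pderiv_X, Pi.single_apply, Pi.single_apply]
      split_ifs <;> simp
  rw [← sub_eq_zero, ← Derivation.commutator_apply, h, Derivation.zero_apply]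

end MvPolynomial

theorem Mf_mul (f g : R2) : Mf (f * g) = Mf f * Mf g :=
  LinearMap.mulLeft_mul ℂ R2 f g

theorem Mf_Yv_mul_Mf_Xv : Mf Yv * Mf Xv = Mf Xv * Mf Yv := by
  rw [← Mf_mul, mul_comm, Mf_mul]

theorem Dx_mul_Mf_Xv : Dx * Mf Xv = Mf Xv * Dx + 1 := by
  rw [Dx, Mf, Derivation.toLinearMap_mul_mulLeft, Xv, pderiv_X_self, LinearMap.mulLeft_one]
  rfl

theorem Dx_mul_Mf_Yv : Dx * Mf Yv = Mf Yv * Dx := by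
  rw [Dx, Mf, Derivation.toLinearMap_mul_mulLeft, Yv, pderiv_X_of_ne (by decide),
    LinearMap.mulLeft_zero_eq_zero, add_zero]

theorem Dy_mul_Mf_Xv : Dy * Mf Xv = Mf Xv * Dy := by
  rw [Dy, Mf, Derivation.toLinearMap_mul_mulLeft, Xv, pderiv_X_of_ne (by decide),
    LinearMap.mulLeft_zero_eq_zero, add_zero]

theorem Dy_mul_Mf_Yv : Dy * Mf Yv = Mf Yv * Dy + 1 := by
  rw [Dy, Mf, Derivation.toLinearMap_mul_mulLeft, Yv, pderiv_X_self, LinearMap.mulLeft_one]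
  rfl

theorem Dy_mul_Dx : Dy * Dx = Dx * Dy :=
  LinearMap.ext fun p => pderiv_pderiv_comm 1 0 p

theorem mul_mul_eq_of_mul_eq {M : Type*} [Semigroup M] {a b c : M} (h : a * b = c) (z : M) :
    a * (b * z) = c * z := by
  rw [← mul_assoc, h]

theorem stmt6 (n : ℕ) (ν : ℂ) (hν : ν = (n : ℂ) / 3) :
    J1 n * J3 = J2 n * (J7 n + ν • 1) ∧
    J1 n * J4 = J7 n * J7 n + J7 n * J8 n - J7 n + ν • J8 n - (ν * (ν + 1)) • 1 ∧
    J1 n * J5 = J6 * (J7 n + J8 n - (ν + 1) • 1) ∧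
    J2 n * J4 = J3 * (J7 n + J8 n - (ν + 1) • 1) ∧
    J2 n * J5 = J7 n * J8 n + J8 n * J8 n + ν • J7 n - J8 n - (ν * (ν + 1)) • 1 ∧
    J2 n * J6 = J1 n * (J8 n + ν • 1) ∧
    J3 * J5 = J4 * (J8 n + ν • 1) ∧
    J3 * J6 = J7 n * J8 n + ν • J7 n + (ν + 1) • J8 n + (ν * (ν + 1)) • 1 ∧
    J4 * J6 = J5 * (J7 n + (ν + 1) • 1) := by
  subst hν
  simp only [J1, J2, J3, J4, J5, J6, J7, J8, sq, Mf_mul, mul_add, add_mul, mul_sub, sub_mul,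
    smul_mul_assoc, mul_smul_comm, mul_one, one_mul, mul_assoc, Dy_mul_Dx,
    mul_mul_eq_of_mul_eq Dx_mul_Mf_Xv, mul_mul_eq_of_mul_eq Dx_mul_Mf_Yv,
    mul_mul_eq_of_mul_eq Dy_mul_Mf_Xv, mul_mul_eq_of_mul_eq Dy_mul_Mf_Yv,
    mul_mul_eq_of_mul_eq Mf_Yv_mul_Mf_Xv]
  refine ⟨?_, ?_, ?_, ?_, ?_, ?_, ?_, ?_, ?_⟩ <;> module
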